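/- arXiv:1406.7063 — 7 statements merged into one kernel-verified Lean document; each statement's English description precedes it below -/
import Mathlib

section
/- Let K/F be a finite Galois extension with group G, let S be an integral domain with fraction field K, and let f : G × G → S \ {0} be a normalized 2-cocycle (with values in the units of K, i.e. f(σ,τ)f(στ,ρ) = σ(f(τ,ρ))f(σ,τρ) and f(1,σ)=f(σ,1)=1, where G acts on K and preserves S). Then the set H = {σ ∈ G | f(σ,σ⁻¹) is a unit of S} is a subgroup of G. -/
/-! If `a = f σ σ⁻¹` has an inverse `b` in `S`, the cocycle identity at `(σ, σ⁻¹, σ)` gives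
`σ • f σ⁻¹ σ = a`, so `σ⁻¹ • b` inverts `f σ⁻¹ σ` in `S`. For a product `σ τ`, the identities at
`(σ, τ, τ⁻¹)` and `(σ τ, τ⁻¹, σ⁻¹)` write `f (σ τ) (σ τ)⁻¹` times an element of `S` as
`f σ σ⁻¹ · σ • f τ τ⁻¹`, which is invertible in `S` when both factors are. -/

section CocycleUnits

variable {G K : Type*} [Group G] [CommRing K] [MulSemiringAction G K] {f : G → G → K}

theorem smul_cocycle_inv_eq
    (hcoc : ∀ σ τ ρ : G, σ • (f τ ρ) * f σ (τ * ρ) = f σ τ * f (σ * τ) ρ)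
    (hnorm : ∀ σ : G, f 1 σ = 1 ∧ f σ 1 = 1) (σ : G) :
    σ • f σ⁻¹ σ = f σ σ⁻¹ := by
  simpa [(hnorm σ).1, (hnorm σ).2] using hcoc σ σ⁻¹ σ

theorem smul_cocycle_mul_inv
    (hcoc : ∀ σ τ ρ : G, σ • (f τ ρ) * f σ (τ * ρ) = f σ τ * f (σ * τ) ρ)
    (hnorm : ∀ σ : G, f 1 σ = 1 ∧ f σ 1 = 1) (σ τ : G) :
    σ • f τ τ⁻¹ = f σ τ * f (σ * τ) τ⁻¹ := by
  simpa [(hnorm σ).2] using hcoc σ τ τ⁻¹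

theorem smul_cocycle_inv_mul_cocycle_mul_inv
    (hcoc : ∀ σ τ ρ : G, σ • (f τ ρ) * f σ (τ * ρ) = f σ τ * f (σ * τ) ρ) (σ τ : G) :
    (σ * τ) • f τ⁻¹ σ⁻¹ * f (σ * τ) (σ * τ)⁻¹ = f (σ * τ) τ⁻¹ * f σ σ⁻¹ := by
  simpa [mul_inv_rev] using hcoc (σ * τ) τ⁻¹ σ⁻¹

variable (S : Subring K)

def cocycleUnitSubgroup (hstab : ∀ (g : G) (s : K), s ∈ S → g • s ∈ S)
    (hfS : ∀ σ τ : G, f σ τ ∈ S)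
    (hcoc : ∀ σ τ ρ : G, σ • (f τ ρ) * f σ (τ * ρ) = f σ τ * f (σ * τ) ρ)
    (hnorm : ∀ σ : G, f 1 σ = 1 ∧ f σ 1 = 1) : Subgroup G where
  carrier := {σ | ∃ y ∈ S, f σ σ⁻¹ * y = 1}
  one_mem' := ⟨1, S.one_mem, by simp [(hnorm 1).1]⟩
  mul_mem' := by
    rintro σ τ ⟨a, ha, hfa⟩ ⟨b, hb, hfb⟩
    refine ⟨f σ τ * (σ * τ) • f τ⁻¹ σ⁻¹ * (σ • b * a),
      S.mul_mem (S.mul_mem (hfS σ τ) (hstab _ _ (hfS τ⁻¹ σ⁻¹)))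
        (S.mul_mem (hstab _ _ hb) ha), ?_⟩
    have hfb' : σ • f τ τ⁻¹ * σ • b = 1 := by rw [← smul_mul', hfb, smul_one]
    linear_combination (f σ τ * σ • b * a) * smul_cocycle_inv_mul_cocycle_mul_inv hcoc σ τ
      - (f σ σ⁻¹ * σ • b * a) * smul_cocycle_mul_inv hcoc hnorm σ τ + (f σ σ⁻¹ * a) * hfb' + hfa
  inv_mem' := by
    rintro σ ⟨a, ha, hfa⟩
    refine ⟨σ⁻¹ • a, hstab _ _ ha, smul_left_cancel σ ?_⟩
    rw [inv_inv, smul_mul', smul_cocycle_inv_eq hcoc hnorm, smul_inv_smul, hfa, smul_one]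

end CocycleUnits

theorem stmt1_general (G K : Type*) [Group G] [Field K] [MulSemiringAction G K]
    (S : Subring K) (hstab : ∀ (g : G) (s : K), s ∈ S → g • s ∈ S)
    (f : G → G → K)
    (hfS : ∀ σ τ : G, f σ τ ∈ S)
    (hcoc : ∀ σ τ ρ : G, σ • (f τ ρ) * f σ (τ * ρ) = f σ τ * f (σ * τ) ρ)
    (hnorm : ∀ σ : G, f 1 σ = 1 ∧ f σ 1 = 1) :
    ∃ H : Subgroup G, (H : Set G) = {σ : G | ∃ y ∈ S, f σ σ⁻¹ * y = 1} :=
  ⟨cocycleUnitSubgroup S hstab hfS hcoc hnorm, rfl⟩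

/-- Let `G` act on a field `K` preserving a subring `S`, and let `f : G × G → S \ {0}` be a
normalized 2-cocycle.  Then `H = {σ ∈ G | f(σ,σ⁻¹) is a unit of S}` is a subgroup of `G`. -/
theorem stmt1 (G K : Type*) [Group G] [Field K] [MulSemiringAction G K]
    (S : Subring K) (hstab : ∀ (g : G) (s : K), s ∈ S → g • s ∈ S)
    (f : G → G → K)
    (hfS : ∀ σ τ : G, f σ τ ∈ S) (hf0 : ∀ σ τ : G, f σ τ ≠ 0)
    (hcoc : ∀ σ τ ρ : G, σ • (f τ ρ) * f σ (τ * ρ) = f σ τ * f (σ * τ) ρ)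
    (hnorm : ∀ σ : G, f 1 σ = 1 ∧ f σ 1 = 1) :
    ∃ H : Subgroup G, (H : Set G) = {σ : G | ∃ y ∈ S, f σ σ⁻¹ * y = 1} :=
  stmt1_general G K S hstab f hfS hcoc hnorm
end

section
/- Let G be a group acting on a field K, S a subring of K stable under the action, and f : G × G → S \ {0} a normalized 2-cocycle. For any σ, τ ∈ G, the identity f^{σ⁻¹}(στ, τ⁻¹σ⁻¹) · f^{σ⁻¹}(σ, τ) · f^{τ}(τ⁻¹, σ⁻¹) = f(σ⁻¹, σ) · f(τ, τ⁻¹) holds, where f^γ(α,β) denotes γ(f(α,β)). -/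
/-! Three instances of the cocycle identity, each with a product of arguments equal to `1`,
express the three factors on the left through `f σ⁻¹ σ`, `f τ τ⁻¹` and the two terms
`f σ⁻¹ (σ * τ)`, `f τ (τ⁻¹ * σ⁻¹)`, which then cancel. -/

section Cocycle

variable {G K : Type*} [Group G] [Field K] [MulSemiringAction G K] {f : G → G → K}

theorem cocycle_smul_mul_of_mul_eq_one
    (hcoc : ∀ σ τ ρ : G, σ • (f τ ρ) * f σ (τ * ρ) = f σ τ * f (σ * τ) ρ)
    (hleft : ∀ σ : G, f 1 σ = 1) (h k : G) :
    h⁻¹ • f h k * f h⁻¹ (h * k) = f h⁻¹ h := by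
  rw [hcoc, inv_mul_cancel, hleft, mul_one]

theorem cocycle_smul_apply_inv
    (hcoc : ∀ σ τ ρ : G, σ • (f τ ρ) * f σ (τ * ρ) = f σ τ * f (σ * τ) ρ)
    (hright : ∀ σ : G, f σ 1 = 1) (g h : G) :
    g • f h h⁻¹ = f g h * f (g * h) h⁻¹ := by
  rw [← hcoc, mul_inv_cancel, hright, mul_one]

end Cocycle

theorem stmt2_general (G K : Type*) [Group G] [Field K] [MulSemiringAction G K]
    (f : G → G → K)
    (hcoc : ∀ σ τ ρ : G, σ • (f τ ρ) * f σ (τ * ρ) = f σ τ * f (σ * τ) ρ)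
    (hnorm : ∀ σ : G, f 1 σ = 1 ∧ f σ 1 = 1)
    (σ τ : G) :
    σ⁻¹ • (f (σ * τ) (τ⁻¹ * σ⁻¹)) * (σ⁻¹ • (f σ τ)) * (τ • (f τ⁻¹ σ⁻¹)) =
      f σ⁻¹ σ * f τ τ⁻¹ := by
  have hleft σ := (hnorm σ).1
  have hright σ := (hnorm σ).2
  have hστ := cocycle_smul_apply_inv hcoc hright σ⁻¹ (σ * τ)
  rw [mul_inv_rev, inv_mul_cancel_left] at hστ
  have hσ := cocycle_smul_mul_of_mul_eq_one hcoc hleft σ τ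
  have hτ := cocycle_smul_mul_of_mul_eq_one hcoc hleft τ⁻¹ σ⁻¹
  rw [inv_inv] at hτ
  rw [hστ, ← hσ, ← hτ]
  ring

/-- For a normalized 2-cocycle `f : G × G → S \ {0}` (G acting on a field `K` stabilizing a
subring `S`), the identity
`f^{σ⁻¹}(στ, τ⁻¹σ⁻¹) · f^{σ⁻¹}(σ, τ) · f^{τ}(τ⁻¹, σ⁻¹) = f(σ⁻¹, σ) · f(τ, τ⁻¹)` holds. -/
theorem stmt2 (G K : Type*) [Group G] [Field K] [MulSemiringAction G K]
    (S : Subring K) (hstab : ∀ (g : G) (s : K), s ∈ S → g • s ∈ S)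
    (f : G → G → K)
    (hfS : ∀ σ τ : G, f σ τ ∈ S) (hf0 : ∀ σ τ : G, f σ τ ≠ 0)
    (hcoc : ∀ σ τ ρ : G, σ • (f τ ρ) * f σ (τ * ρ) = f σ τ * f (σ * τ) ρ)
    (hnorm : ∀ σ : G, f 1 σ = 1 ∧ f σ 1 = 1)
    (σ τ : G) :
    σ⁻¹ • (f (σ * τ) (τ⁻¹ * σ⁻¹)) * (σ⁻¹ • (f σ τ)) * (τ • (f τ⁻¹ σ⁻¹)) =
      f σ⁻¹ σ * f τ τ⁻¹ :=
  stmt2_general G K f hcoc hnorm σ τ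
end

section
/- Let V ⊆ W be valuation rings of a field F, let K/F be a finite Galois extension, let S be the integral closure of V in K, and let R = W·S (the subring of K generated by W and S). Then R is the integral closure of W in K. -/
/-! If `z` is a root of a monic `p` with coefficients in `W`, then, since `V` is a valuation ring,
the product `d ∈ V` of the inverses of the coefficients lying outside `V` satisfies `d * pᵢ ∈ V`
for all `i` and `d⁻¹ ∈ W`. Hence `d * z`, a root of the monic `p.scaleRoots d`, is integral over `V`,
and `z = d⁻¹ * (d * z)` lies in `W·S`. -/

open Polynomial

theorem mem_integralClosure_subring_iff {F K : Type*} [CommRing F] [CommRing K] [Algebra F K]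
    (T : Subring F) (z : K) :
    z ∈ integralClosure T K ↔ ∃ p : F[X], p.Monic ∧ (∀ i, p.coeff i ∈ T) ∧ aeval z p = 0 := by
  constructor
  · rintro ⟨p, hpm, hpz⟩
    refine ⟨p.map T.subtype, hpm.map _, fun i => by simp, ?_⟩
    rw [← hpz, ← aeval_def]
    exact aeval_map_algebraMap F z p
  · rintro ⟨p, hpm, hpT, hpz⟩
    have hlifts : p ∈ lifts T.subtype :=
      (lifts_iff_coeff_lifts p).2 fun i => ⟨⟨_, hpT i⟩, rfl⟩
    obtain ⟨q, rfl, -, hqm⟩ := lifts_and_natDegree_eq_and_monic hlifts hpm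
    refine ⟨q, hqm, ?_⟩
    rw [← aeval_def, ← hpz]
    exact (aeval_map_algebraMap F z q).symm

section ClearingDenominators

variable {F : Type*} [Field F] {V W : Subring F}

theorem exists_inv_mem_mul_mem (hV : ∀ x : F, x ∈ V ∨ x⁻¹ ∈ V) {a : F} (ha : a ∈ W) :
    ∃ c ∈ V, c ≠ 0 ∧ c⁻¹ ∈ W ∧ c * a ∈ V := by
  by_cases haV : a ∈ V
  · exact ⟨1, V.one_mem, one_ne_zero, by simp, by simpa using haV⟩
  · have ha0 : a ≠ 0 := fun h => haV (h ▸ V.zero_mem)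
    refine ⟨a⁻¹, (hV a).resolve_left haV, inv_ne_zero ha0, by simpa using ha, ?_⟩
    simp [ha0]

theorem exists_inv_mem_forall_mul_mem (hV : ∀ x : F, x ∈ V ∨ x⁻¹ ∈ V) {ι : Type*}
    (s : Finset ι) (f : ι → F) (hf : ∀ i ∈ s, f i ∈ W) :
    ∃ d ∈ V, d ≠ 0 ∧ d⁻¹ ∈ W ∧ ∀ i ∈ s, d * f i ∈ V := by
  classical
  induction s using Finset.induction_on with
  | empty => exact ⟨1, V.one_mem, one_ne_zero, by simp, by simp⟩
  | insert j s hj ih =>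
    obtain ⟨d, hdV, hd0, hdW, hds⟩ := ih fun i hi => hf i (Finset.mem_insert_of_mem hi)
    obtain ⟨c, hcV, hc0, hcW, hcj⟩ := exists_inv_mem_mul_mem hV (hf j (Finset.mem_insert_self j s))
    refine ⟨d * c, V.mul_mem hdV hcV, mul_ne_zero hd0 hc0,
      by simpa [mul_inv, mul_comm] using W.mul_mem hdW hcW, fun i hi => ?_⟩
    rcases Finset.mem_insert.1 hi with rfl | hi
    · simpa [mul_assoc] using V.mul_mem hdV hcj
    · simpa [mul_right_comm] using V.mul_mem (hds i hi) hcV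

end ClearingDenominators

theorem integralClosure_mono_subring {F K : Type*} [CommRing F] [CommRing K] [Algebra F K]
    {V W : Subring F} (hVW : V ≤ W) : (integralClosure V K : Set K) ⊆ integralClosure W K := by
  intro z hz
  obtain ⟨p, hpm, hpV, hpz⟩ := (mem_integralClosure_subring_iff V z).1 hz
  exact (mem_integralClosure_subring_iff W z).2 ⟨p, hpm, fun i => hVW (hpV i), hpz⟩

theorem coeff_scaleRoots_mem {F : Type*} [CommRing F] {V : Subring F} {p : F[X]} (hp : p.Monic)
    {d : F} (hd : d ∈ V) (hdp : ∀ i, d * p.coeff i ∈ V) (i : ℕ) :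
    (p.scaleRoots d).coeff i ∈ V := by
  rw [coeff_scaleRoots]
  rcases lt_trichotomy i p.natDegree with hi | rfl | hi
  · obtain ⟨k, hk⟩ : ∃ k, p.natDegree - i = k + 1 := ⟨p.natDegree - i - 1, by omega⟩
    rw [hk, pow_succ', ← mul_assoc, mul_comm (p.coeff i)]
    exact V.mul_mem (hdp i) (V.pow_mem hd k)
  · simp [hp.coeff_natDegree]
  · simp [coeff_eq_zero_of_natDegree_lt hi]

theorem exists_mul_mem_integralClosure {F K : Type*} [Field F] [CommRing K] [Algebra F K]
    {V W : Subring F} (hV : ∀ x : F, x ∈ V ∨ x⁻¹ ∈ V) {z : K} (hz : z ∈ integralClosure W K) :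
    ∃ d : F, d ≠ 0 ∧ d⁻¹ ∈ W ∧ algebraMap F K d * z ∈ integralClosure V K := by
  obtain ⟨p, hpm, hpW, hpz⟩ := (mem_integralClosure_subring_iff W z).1 hz
  obtain ⟨d, hdV, hd0, hdW, hdp⟩ :=
    exists_inv_mem_forall_mul_mem hV p.support p.coeff fun i _ => hpW i
  have hd_coeff : ∀ i, d * p.coeff i ∈ V := fun i => by
    by_cases hi : i ∈ p.support
    · exact hdp i hi
    · simp [notMem_support_iff.1 hi]
  refine ⟨d, hd0, hdW, (mem_integralClosure_subring_iff V _).2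
    ⟨p.scaleRoots d, (monic_scaleRoots_iff d).2 hpm, coeff_scaleRoots_mem hpm hdV hd_coeff, ?_⟩⟩
  rw [aeval_def] at hpz ⊢
  exact scaleRoots_eval₂_eq_zero _ hpz

theorem stmt4_general (F K : Type*) [Field F] [Field K] [Algebra F K]
    (V W : Subring F)
    (hV : ∀ x : F, x ∈ V ∨ x⁻¹ ∈ V)
    (hVW : V ≤ W) :
    Subring.closure ((W.map (algebraMap F K) : Set K) ∪ ((integralClosure V K).toSubring : Set K))
      = (integralClosure W K).toSubring := by
  refine le_antisymm (Subring.closure_le.2 (Set.union_subset ?_ ?_)) fun z hz => ?_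
  · rintro _ ⟨w, hw, rfl⟩
    exact (integralClosure W K).algebraMap_mem ⟨w, hw⟩
  · exact integralClosure_mono_subring hVW
  · obtain ⟨d, hd0, hdW, hdz⟩ := exists_mul_mem_integralClosure hV hz
    have hz_eq : z = algebraMap F K d⁻¹ * (algebraMap F K d * z) := by
      rw [← mul_assoc, ← map_mul, inv_mul_cancel₀ hd0, map_one, one_mul]
    rw [hz_eq]
    exact Subring.mul_mem _ (Subring.subset_closure (Or.inl ⟨d⁻¹, hdW, rfl⟩))
      (Subring.subset_closure (Or.inr hdz))

/-- Let `V ⊆ W` be valuation rings of a field `F`, let `K/F` be a finite Galois extension,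
let `S` be the integral closure of `V` in `K`, and let `R = W·S` be the subring of `K`
generated by (the image of) `W` together with `S`.  Then `R` is the integral closure of `W`
in `K`. -/
theorem stmt4 (F K : Type*) [Field F] [Field K] [Algebra F K]
    [FiniteDimensional F K] [IsGalois F K]
    (V W : Subring F)
    (hV : ∀ x : F, x ∈ V ∨ x⁻¹ ∈ V) (hW : ∀ x : F, x ∈ W ∨ x⁻¹ ∈ W)
    (hVW : V ≤ W) :
    Subring.closure ((W.map (algebraMap F K) : Set K) ∪ ((integralClosure V K).toSubring : Set K))
      = (integralClosure W K).toSubring :=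
  stmt4_general F K V W hV hVW
end

section
/- Let V₁ ⊆ W₁ be valuation rings of a field K with V₁ ≠ W₁. If t ∈ V₁ and t ∉ J(V₁)², then t is a unit of W₁. -/
/-!
If `t` were a nonunit of `W₁`, pick `w ∈ W₁ \ V₁`; then `w⁻¹` lies in `J(V₁)`, and `t * w` lies
in `J(W₁) ⊆ J(V₁)`, so `t = (t * w) * w⁻¹ ∈ J(V₁)²`.
-/

namespace ValuationSubring

variable {K : Type*} [Field K]

theorem mul_mem_nonunits {A : ValuationSubring K} {x y : K} (hx : x ∈ A.nonunits) (hy : y ∈ A) :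
    x * y ∈ A.nonunits := by
  rw [mem_nonunits_iff, map_mul]
  exact mul_lt_one_of_lt_of_le (A.mem_nonunits_iff.mp hx) ((A.valuation_le_one_iff y).mpr hy)

theorem exists_inv_mem_nonunits_of_lt {V W : ValuationSubring K} (hVW : V < W) :
    ∃ w ∈ W, w ≠ 0 ∧ w⁻¹ ∈ V.nonunits := by
  obtain ⟨w, hwW, hwV⟩ := SetLike.exists_of_lt hVW
  exact ⟨w, hwW, ne_of_mem_of_not_mem V.zero_mem hwV |>.symm,
    V.inv_mem_nonunits_iff.mpr (Or.inr hwV)⟩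

theorem mem_maximalIdeal_sq_of_lt {V W : ValuationSubring K} (hVW : V < W) {x : V}
    (hx : (x : K) ∈ W.nonunits) : x ∈ IsLocalRing.maximalIdeal V ^ 2 := by
  obtain ⟨w, hwW, hw0, hwinv⟩ := exists_inv_mem_nonunits_of_lt hVW
  have hxw : (x : K) * w ∈ V.nonunits :=
    nonunits_le_nonunits.mpr hVW.le (mul_mem_nonunits hx hwW)
  obtain ⟨hxwV, hxw_max⟩ := mem_nonunits_iff_exists_mem_maximalIdeal.mp hxw
  obtain ⟨hwinvV, hwinv_max⟩ := mem_nonunits_iff_exists_mem_maximalIdeal.mp hwinv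
  have hx_eq : x = ⟨_, hxwV⟩ * ⟨_, hwinvV⟩ :=
    Subtype.ext (by simp [mul_assoc, mul_inv_cancel₀ hw0])
  rw [hx_eq, pow_two]
  exact Ideal.mul_mem_mul hxw_max hwinv_max

end ValuationSubring

/-- Let `V₁ ⊊ W₁` be valuation rings of a field `K`.  If `t ∈ V₁` and `t ∉ J(V₁)²`, then
`t` is a unit of `W₁`. -/
theorem stmt6 (K : Type*) [Field K] (V₁ W₁ : ValuationSubring K)
    (h : V₁ ≤ W₁) (hne : V₁ ≠ W₁) (t : K) (ht : t ∈ V₁)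
    (h2 : (⟨t, ht⟩ : V₁) ∉ (IsLocalRing.maximalIdeal V₁) ^ 2) :
    IsUnit (⟨t, h ht⟩ : W₁) := by
  by_contra htW
  have ht_nonunit : t ∈ W₁.nonunits :=
    ValuationSubring.coe_mem_nonunits_iff.mpr ((IsLocalRing.mem_maximalIdeal _).mpr htW)
  exact h2 (ValuationSubring.mem_maximalIdeal_sq_of_lt (lt_of_le_of_ne h hne) ht_nonunit)
end

section
/- Let V be a valuation ring of a field F whose maximal ideal J(V) satisfies J(V)² = J(V) (i.e., J(V) is non-principal), let V₁ be a valuation ring of a finite extension K of F lying over V (V₁ ∩ F = V). Then J(V₁)² = J(V₁). -/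
/-!
For a valuation `v`, the maximal ideal of its valuation ring is idempotent exactly when every value
`γ < 1` is bounded by `δ ^ 2` for some value `δ < 1`. In a finite extension `K/F` each nonzero value
of `K` has a positive power `m` that is a value of `F` (two monomials of a vanishing polynomial
relation must have equal value). Iterating the property in `F` bounds `γ ^ m` by `δ ^ (2 * m)`,
hence `γ ≤ δ ^ 2`.
-/

open IsLocalRing

section OrderedMonoid

variable {M : Type*} [CommMonoid M] [PartialOrder M] [IsOrderedMonoid M]

theorem exists_le_pow_two_pow_of_forall_exists_le_sq {S : Set M}
    (hS : ∀ γ ∈ S, γ < 1 → ∃ δ ∈ S, δ < 1 ∧ γ ≤ δ ^ 2) {γ : M} (hγS : γ ∈ S) (hγ : γ < 1) :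
    ∀ n : ℕ, ∃ δ ∈ S, δ < 1 ∧ γ ≤ δ ^ 2 ^ n
  | 0 => ⟨γ, hγS, hγ, by rw [pow_zero, pow_one]⟩
  | n + 1 => by
    obtain ⟨δ, hδS, hδ, hγδ⟩ := exists_le_pow_two_pow_of_forall_exists_le_sq hS hγS hγ n
    obtain ⟨ε, hεS, hε, hδε⟩ := hS δ hδS hδ
    refine ⟨ε, hεS, hε, hγδ.trans ?_⟩
    calc δ ^ 2 ^ n ≤ (ε ^ 2) ^ 2 ^ n := pow_le_pow_left' hδε _
      _ = ε ^ 2 ^ (n + 1) := by rw [← pow_mul, pow_succ', mul_comm]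

end OrderedMonoid

section GroupWithZero

variable {Γ₀ : Type*} [LinearOrderedCommGroupWithZero Γ₀]

theorem exists_le_sq_of_pow_mem {S : Set Γ₀}
    (hS : ∀ γ ∈ S, γ < 1 → ∃ δ ∈ S, δ < 1 ∧ γ ≤ δ ^ 2) {γ : Γ₀} (hγ : γ < 1) {m : ℕ}
    (hm : m ≠ 0) (hγm : γ ^ m ∈ S) : ∃ δ ∈ S, δ < 1 ∧ γ ≤ δ ^ 2 := by
  obtain ⟨δ, hδS, hδ, hle⟩ := exists_le_pow_two_pow_of_forall_exists_le_sq hS hγm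
    (pow_lt_one₀ zero_le hγ hm) (2 * m)
  refine ⟨δ, hδS, hδ, (pow_le_pow_iff_left₀ zero_le zero_le hm).mp ?_⟩
  calc γ ^ m ≤ δ ^ 2 ^ (2 * m) := hle
    _ ≤ δ ^ (2 * m) := pow_le_pow_right_of_le_one' hδ.le (Nat.lt_two_pow_self).le
    _ = (δ ^ 2) ^ m := pow_mul δ 2 m

end GroupWithZero

theorem ValuationSubring.valuationSubring_comap_valuation {K L : Type*} [Field K] [Field L]
    (A : ValuationSubring L) (f : K →+* L) :
    (A.valuation.comap f).valuationSubring = A.comap f := by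
  ext x
  rw [ValuationSubring.mem_comap, ← A.valuation_le_one_iff]
  rfl

namespace Valuation

theorem exists_ne_map_eq_of_sum_eq_zero {R Γ₀ : Type*} [Ring R]
    [LinearOrderedCommGroupWithZero Γ₀] (v : Valuation R Γ₀) {ι : Type*} {s : Finset ι}
    {f : ι → R} (hs : s.Nonempty) (hf : ∀ i ∈ s, v (f i) ≠ 0) (hsum : ∑ i ∈ s, f i = 0) :
    ∃ i ∈ s, ∃ k ∈ s, i ≠ k ∧ v (f i) = v (f k) := by
  classical
  obtain ⟨j, hj, hmax⟩ := s.exists_max_image (fun i => v (f i)) hs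
  by_contra! hne
  have hlt : ∀ i ∈ s \ {j}, v (f i) < v (f j) := by
    intro i hi
    rw [Finset.mem_sdiff, Finset.mem_singleton] at hi
    exact (hmax i hi.1).lt_of_ne (hne i hi.1 j hj hi.2)
  have := v.map_sum_eq_of_lt hj hlt
  rw [hsum, v.map_zero] at this
  exact hf j hj this.symm

variable {F K Γ₀ : Type*} [Field F] [Field K] [Algebra F K] [LinearOrderedCommGroupWithZero Γ₀]

theorem exists_pow_eq_map_algebraMap (w : Valuation K Γ₀) {x : K} (halg : IsAlgebraic F x)
    (hx : x ≠ 0) : ∃ m ≠ 0, ∃ c : F, w (algebraMap F K c) = w x ^ m := by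
  obtain ⟨p, hp0, hpx⟩ := halg
  have hsum : ∑ i ∈ p.support, algebraMap F K (p.coeff i) * x ^ i = 0 := by
    rwa [Polynomial.aeval_def, Polynomial.eval₂_eq_sum, Polynomial.sum_def] at hpx
  have hcoeff : ∀ i ∈ p.support, w (algebraMap F K (p.coeff i)) ≠ 0 := fun i hi => by
    simpa using Polynomial.mem_support_iff.mp hi
  have hterm : ∀ i ∈ p.support, w (algebraMap F K (p.coeff i) * x ^ i) ≠ 0 := fun i hi => by
    simpa [hx] using Polynomial.mem_support_iff.mp hi
  obtain ⟨i, hi, k, hk, hik, heq⟩ :=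
    w.exists_ne_map_eq_of_sum_eq_zero (Polynomial.support_nonempty.mpr hp0) hterm hsum
  wlog hlt : i < k generalizing i k
  · exact this k hk i hi hik.symm heq.symm (hik.symm.lt_of_le (not_lt.mp hlt))
  simp only [map_mul, map_pow] at heq
  refine ⟨k - i, Nat.sub_ne_zero_of_lt hlt, p.coeff i / p.coeff k, ?_⟩
  have hxi : w x ^ i ≠ 0 := pow_ne_zero _ ((ne_zero_iff w).mpr hx)
  rw [map_div₀, map_div₀, div_eq_iff (hcoeff k hk)]
  exact mul_right_cancel₀ hxi (by rw [heq, ← pow_sub_mul_pow (w x) hlt.le]; ac_rfl)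

theorem maximalIdeal_valuationSubring_sq_eq_iff (v : Valuation K Γ₀) :
    maximalIdeal v.valuationSubring ^ 2 = maximalIdeal v.valuationSubring ↔
      ∀ x : K, v x < 1 → ∃ y : K, v y < 1 ∧ v x ≤ v y ^ 2 := by
  set J := maximalIdeal v.valuationSubring
  constructor
  · intro hsq x hx
    suffices key : ∀ a ∈ J * J, ∃ y : K, v y < 1 ∧ v (a : K) ≤ v y ^ 2 by
      refine key ⟨x, hx.le⟩ ?_
      rw [← sq, hsq]
      exact v.mem_maximalIdeal_iff.mpr hx
    refine fun a ha => Submodule.mul_induction_on ha (fun a ha b hb => ?_)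
      (fun a b ⟨y, hy, hay⟩ ⟨z, hz, hbz⟩ => ?_)
    · rw [mem_maximalIdeal_iff] at ha hb
      rcases le_total (v a) (v b) with hab | hba
      · exact ⟨b, hb, by simpa [sq] using mul_le_mul_left hab (v b)⟩
      · exact ⟨a, ha, by simpa [sq] using mul_le_mul_right hba (v a)⟩
    · rcases le_total (v y) (v z) with hyz | hzy
      · exact ⟨z, hz, v.map_add_le (hay.trans (pow_le_pow_left' hyz 2)) hbz⟩
      · exact ⟨y, hy, v.map_add_le hay (hbz.trans (pow_le_pow_left' hzy 2))⟩
  · intro h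
    refine le_antisymm (Ideal.pow_le_self two_ne_zero) fun a ha => ?_
    obtain ⟨y, hy, hay⟩ := h a (v.mem_maximalIdeal_iff.mp ha)
    by_cases hy0 : y = 0
    · have : a = 0 := by simpa [hy0] using hay
      rw [this]
      exact zero_mem _
    have hquot : v (a / y) < 1 := by
      rw [map_div₀]
      refine lt_of_le_of_lt ?_ hy
      rwa [div_le_iff₀ (zero_lt_iff.mpr ((ne_zero_iff v).mpr hy0)), ← sq]
    have hfactor : a = ⟨y, hy.le⟩ * ⟨a / y, hquot.le⟩ :=
      Subtype.ext (mul_div_cancel₀ (a : K) hy0).symm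
    rw [hfactor, sq]
    exact Ideal.mul_mem_mul (v.mem_maximalIdeal_iff.mpr hy) (v.mem_maximalIdeal_iff.mpr hquot)

theorem forall_exists_le_sq_of_comap_algebraMap [Algebra.IsAlgebraic F K] (w : Valuation K Γ₀)
    (hF : ∀ c : F, w.comap (algebraMap F K) c < 1 →
      ∃ a : F, w.comap (algebraMap F K) a < 1 ∧
        w.comap (algebraMap F K) c ≤ w.comap (algebraMap F K) a ^ 2) :
    ∀ x : K, w x < 1 → ∃ y : K, w y < 1 ∧ w x ≤ w y ^ 2 := by
  intro x hx
  by_cases hx0 : x = 0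
  · exact ⟨0, by simp, by simp [hx0]⟩
  obtain ⟨m, hm, c, hc⟩ :=
    w.exists_pow_eq_map_algebraMap (Algebra.IsAlgebraic.isAlgebraic (R := F) x) hx0
  have hS : ∀ γ ∈ Set.range (w.comap (algebraMap F K)), γ < 1 →
      ∃ δ ∈ Set.range (w.comap (algebraMap F K)), δ < 1 ∧ γ ≤ δ ^ 2 := by
    rintro _ ⟨c, rfl⟩ hc
    obtain ⟨a, ha, hca⟩ := hF c hc
    exact ⟨_, ⟨a, rfl⟩, ha, hca⟩
  obtain ⟨_, ⟨a, rfl⟩, ha, hxa⟩ := exists_le_sq_of_pow_mem hS hx hm ⟨c, hc⟩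
  exact ⟨algebraMap F K a, ha, hxa⟩

end Valuation

/-- Let `V` be a valuation ring of `F` whose maximal ideal satisfies `J(V)² = J(V)`
(i.e. `J(V)` is non-principal), let `K/F` be a finite extension and `V₁` a valuation ring
of `K` lying over `V`.  Then `J(V₁)² = J(V₁)`. -/
theorem stmt7 (F K : Type*) [Field F] [Field K] [Algebra F K] [FiniteDimensional F K]
    (V : ValuationSubring F) (V₁ : ValuationSubring K)
    (hover : V₁.comap (algebraMap F K) = V)
    (hJ : (IsLocalRing.maximalIdeal V) ^ 2 = IsLocalRing.maximalIdeal V) :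
    (IsLocalRing.maximalIdeal V₁) ^ 2 = IsLocalRing.maximalIdeal V₁ := by
  subst hover
  rw [← V₁.valuationSubring_comap_valuation,
    Valuation.maximalIdeal_valuationSubring_sq_eq_iff] at hJ
  rw [← V₁.valuationSubring_valuation, Valuation.maximalIdeal_valuationSubring_sq_eq_iff]
  exact V₁.valuation.forall_exists_le_sq_of_comap_algebraMap hJ
end

section
/- Let V be a valuation ring of a field F, K/F a finite Galois extension in which V is unramified and defectless, S the integral closure of V in K, V₁ a valuation ring of K lying over V, and M = J(V₁) ∩ S. Then M² = J(V₁)² ∩ S. -/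
/-!
Every `z ∈ V₁` is a quotient `s / t` of elements of `S` with `t ∉ M`. Normalize a polynomial
killing `z` so that its coefficients lie in `V` and one of them is `1`; its Horner tails
`c_k + c_{k+1} z + c_{k+2} z² + ⋯` lie in every valuation ring of `K` containing `V` (directly if
`z` does, and via `z⁻¹` otherwise), hence in `S` by Krull, and two consecutive tails give `s` and
`t`. Thus `V₁` is the localization of `S` at `M`; as `M` is maximal, `M²` is `M`-primary and hence
equal to the contraction of `(M V₁)² = J(V₁)²`.
-/

open Polynomial IsLocalRing

namespace Polynomial
variable {R A : Type*} [CommSemiring R] [CommSemiring A] [Algebra R A]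

theorem coeff_iterate_divX (p : R[X]) (k n : ℕ) : (divX^[k] p).coeff n = p.coeff (n + k) := by
  induction k generalizing n with
  | zero => rfl
  | succ k ih => rw [Function.iterate_succ_apply', coeff_divX, ih, add_right_comm]; rfl

theorem aeval_iterate_divX (p : R[X]) (z : A) (k : ℕ) :
    aeval z (divX^[k] p) = algebraMap R A (p.coeff k) + z * aeval z (divX^[k + 1] p) := by
  conv_lhs => rw [← divX_mul_X_add (divX^[k] p)]
  rw [Function.iterate_succ_apply', coeff_iterate_divX, zero_add]
  simp only [map_add, map_mul, aeval_X, aeval_C]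
  ring

end Polynomial

section Krull
variable {F K : Type*} [Field F] [Field K] [Algebra F K] {V : Subring F}

theorem integralClosure_le_valuationSubring {W : ValuationSubring K}
    (hVW : ∀ v ∈ V, algebraMap F K v ∈ W) : (integralClosure V K).toSubring ≤ W.toSubring :=
  haveI : IsIntegrallyClosedIn W.toSubring K := inferInstanceAs (IsIntegrallyClosedIn W K)
  Subring.integralClosure_le_iff.mpr fun v => hVW v v.2

theorem isIntegral_of_forall_mem_valuationSubring {y : K}
    (h : ∀ W : ValuationSubring K, (∀ v ∈ V, algebraMap F K v ∈ W) → y ∈ W) :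
    IsIntegral V y := by
  by_contra hy
  obtain ⟨W, hSW, hyW⟩ := Subring.exists_le_valuationSubring_of_isIntegrallyClosedIn
    (R := (integralClosure V K).toSubring) hy
  exact hyW (h W fun v hv => hSW (algebraMap_mem (integralClosure V K) (⟨v, hv⟩ : V)))

end Krull

section HornerTails
variable {F K : Type*} [Field F] [Field K] [Algebra F K] {V : Subring F} {p : F[X]} {z : K}

theorem aeval_iterate_divX_mem_valuationSubring (hpV : ∀ i, p.coeff i ∈ V) (hpz : aeval z p = 0)
    {W : ValuationSubring K} (hVW : ∀ v ∈ V, algebraMap F K v ∈ W) (k : ℕ) :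
    aeval z (divX^[k] p) ∈ W := by
  by_cases hzW : z ∈ W
  · rw [aeval_eq_sum_range]
    refine sum_mem fun i _ => ?_
    rw [Algebra.smul_def, coeff_iterate_divX]
    exact mul_mem (hVW _ (hpV _)) (pow_mem hzW _)
  -- Otherwise `z⁻¹ ∈ W`, and the tails are reached from `aeval z p = 0` by `u ↦ (u - c) / z`.
  have hz0 : z ≠ 0 := fun h => hzW (h ▸ W.zero_mem)
  have hzinv : z⁻¹ ∈ W := (W.mem_or_inv_mem z).resolve_left hzW
  induction k with
  | zero => simp [hpz]
  | succ k ih =>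
    have h : aeval z (divX^[k + 1] p) =
        z⁻¹ * (aeval z (divX^[k] p) - algebraMap F K (p.coeff k)) := by
      rw [aeval_iterate_divX p z k, add_sub_cancel_left, inv_mul_cancel_left₀ hz0]
    rw [h]
    exact mul_mem hzinv (sub_mem ih (hVW _ (hpV _)))

theorem isIntegral_aeval_iterate_divX (hpV : ∀ i, p.coeff i ∈ V) (hpz : aeval z p = 0) (k : ℕ) :
    IsIntegral V (aeval z (divX^[k] p)) :=
  isIntegral_of_forall_mem_valuationSubring fun _ hVW =>
    aeval_iterate_divX_mem_valuationSubring hpV hpz hVW k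

end HornerTails

theorem ValuationSubring.mul_mem_nonunits_s8 {K : Type*} [Field K] (A : ValuationSubring K)
    {a b : K} (ha : a ∈ A) (hb : b ∈ A.nonunits) : a * b ∈ A.nonunits := by
  rw [ValuationSubring.mem_nonunits_iff] at hb ⊢
  rw [map_mul]
  exact Right.mul_lt_one_of_le_of_lt ((A.valuation_le_one_iff a).mpr ha) hb

section Fractions
variable {F K : Type*} [Field F] [Field K] [Algebra F K] {V : Subring F}

/-- Dividing a polynomial by a coefficient of maximal valuation puts all its coefficients in `V`. -/
theorem exists_aeval_eq_zero_coeff_mem_and_coeff_eq_one (hV : ∀ x : F, x ∈ V ∨ x⁻¹ ∈ V)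
    {z : K} (hz : IsAlgebraic F z) :
    ∃ p : F[X], aeval z p = 0 ∧ (∀ i, p.coeff i ∈ V) ∧ ∃ j, p.coeff j = 1 := by
  obtain ⟨q, hq0, hqz⟩ := hz
  let 𝒱 : ValuationSubring F := { V with mem_or_inv_mem' := hV }
  obtain ⟨j, hj, hmax⟩ := q.support.exists_max_image (fun i => 𝒱.valuation (q.coeff i))
    (nonempty_support_iff.mpr hq0)
  have hj0 : q.coeff j ≠ 0 := mem_support_iff.mp hj
  refine ⟨C (q.coeff j)⁻¹ * q, by simp [hqz], fun i => ?_, j, by simp [hj0]⟩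
  rw [coeff_C_mul]
  by_cases hi : i ∈ q.support
  · change _ ∈ 𝒱
    rw [← 𝒱.valuation_le_one_iff, map_mul, map_inv₀, inv_mul_le_one₀ ?_]
    · exact hmax i hi
    · exact (Valuation.pos_iff _).mpr hj0
  · rw [notMem_support_iff.mp hi, mul_zero]
    exact V.zero_mem

theorem exists_mul_eq_of_mem_valuationSubring (hV : ∀ x : F, x ∈ V ∨ x⁻¹ ∈ V)
    [Algebra.IsAlgebraic F K] {V₁ : ValuationSubring K} {z : K} (hz : z ∈ V₁) :
    ∃ t s : integralClosure V K, (t : K) ∉ V₁.nonunits ∧ z * t = s := by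
  obtain ⟨p, hpz, hpV, j, hj⟩ := exists_aeval_eq_zero_coeff_mem_and_coeff_eq_one hV
    (Algebra.IsAlgebraic.isAlgebraic (R := F) z)
  set u : ℕ → K := fun k => aeval z (divX^[k] p)
  have hu_int (k : ℕ) : IsIntegral V (u k) := isIntegral_aeval_iterate_divX hpV hpz k
  have hu_succ (k : ℕ) : u k = algebraMap F K (p.coeff k) + z * u (k + 1) :=
    aeval_iterate_divX p z k
  -- Since `u j - z * u (j + 1) = 1` and `u 0 = 0`, some `u (k + 1)` is a unit of `V₁`.
  obtain ⟨k, hk⟩ : ∃ k, u (k + 1) ∉ V₁.nonunits := by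
    by_contra! h
    have huj : u j ∈ V₁.nonunits := by
      cases j with
      | zero => simp [u, hpz]
      | succ j => exact h j
    have h1 : (1 : K) = u j - z * u (j + 1) := by rw [hu_succ j, hj, map_one]; ring
    have := sub_mem huj (V₁.mul_mem_nonunits_s8 hz (h j))
    rw [← h1, ValuationSubring.mem_nonunits_iff, map_one] at this
    exact lt_irrefl _ this
  refine ⟨⟨u (k + 1), hu_int (k + 1)⟩, ⟨u k - algebraMap F K (p.coeff k), ?_⟩, hk, ?_⟩
  · exact (hu_int k).sub (isIntegral_algebraMap (x := (⟨p.coeff k, hpV k⟩ : V)))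
  · show z * u (k + 1) = u k - _
    rw [hu_succ k]; ring

end Fractions

section Localization
variable {S A : Type*} [CommRing S] [CommRing A] [IsLocalRing A]

theorem isMaximal_comap_maximalIdeal_of_isLocalHom (f : S →+* A) [IsLocalHom f] :
    ((maximalIdeal A).comap f).IsMaximal := by
  refine Ideal.isMaximal_iff.mpr ⟨by simp, fun J x _ hx hxJ => ?_⟩
  have hfx : IsUnit (f x) := of_not_not hx
  obtain ⟨y, hy⟩ := (isUnit_of_map_unit f x hfx).exists_left_inv
  exact hy ▸ J.mul_mem_left y hxJ

variable [Algebra S A]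

theorem isLocalization_atPrime_comap_maximalIdeal
    (hinj : Function.Injective (algebraMap S A))
    (hfrac : ∀ a : A, ∃ t s : S,
      algebraMap S A t ∉ maximalIdeal A ∧ a * algebraMap S A t = algebraMap S A s) :
    IsLocalization.AtPrime A ((maximalIdeal A).comap (algebraMap S A)) where
  map_units t := of_not_not t.2
  surj a := by
    obtain ⟨t, s, ht, h⟩ := hfrac a
    exact ⟨⟨s, t, ht⟩, h⟩
  exists_of_eq h := ⟨1, by rw [hinj h]⟩

end Localization

section IntegralClosure
variable {F K : Type*} [Field F] [Field K] [Algebra F K] {V : Subring F} {V₁ : ValuationSubring K}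

def integralClosureToValuationSubring (hVV₁ : V ≤ (V₁.comap (algebraMap F K)).toSubring) :
    integralClosure V K →+* V₁ :=
  (algebraMap (integralClosure V K) K).codRestrict V₁
    fun x => integralClosure_le_valuationSubring (W := V₁) (fun _ hv => hVV₁ hv) x.2

theorem integralClosureToValuationSubring_injective
    (hVV₁ : V ≤ (V₁.comap (algebraMap F K)).toSubring) :
    Function.Injective (integralClosureToValuationSubring hVV₁) :=
  fun _ _ h => Subtype.ext (congrArg Subtype.val h :)

theorem isLocalHom_integralClosureToValuationSubring_comp
    (hover : (V₁.comap (algebraMap F K)).toSubring = V) :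
    IsLocalHom ((integralClosureToValuationSubring hover.ge).comp
      (algebraMap V (integralClosure V K))) := by
  refine ⟨fun a ha => ?_⟩
  obtain ⟨b, hb⟩ := ha.exists_right_inv
  have hab : algebraMap F K a * b = 1 := congrArg Subtype.val hb
  have ha0 : (a : F) ≠ 0 := by rintro h; simp [h] at hab
  have hinv : (a : F)⁻¹ ∈ (V₁.comap (algebraMap F K)).toSubring := by
    show algebraMap F K (a : F)⁻¹ ∈ V₁
    rw [map_inv₀, inv_eq_of_mul_eq_one_right hab]
    exact b.2
  rw [hover] at hinv
  exact isUnit_iff_exists_inv.mpr ⟨⟨_, hinv⟩, Subtype.ext (mul_inv_cancel₀ ha0)⟩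

theorem isMaximal_comap_integralClosureToValuationSubring
    (hover : (V₁.comap (algebraMap F K)).toSubring = V) :
    ((maximalIdeal V₁).comap (integralClosureToValuationSubring hover.ge)).IsMaximal := by
  have := isLocalHom_integralClosureToValuationSubring_comp hover
  apply Ideal.isMaximal_of_isIntegral_of_isMaximal_comap (R := V)
  rw [Ideal.comap_comap]
  exact isMaximal_comap_maximalIdeal_of_isLocalHom _

end IntegralClosure

theorem stmt8_general (F K : Type*) [Field F] [Field K] [Algebra F K]
    [FiniteDimensional F K]
    (V : Subring F) (hV : ∀ x : F, x ∈ V ∨ x⁻¹ ∈ V)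
    (V₁ : ValuationSubring K) (hover : (V₁.comap (algebraMap F K)).toSubring = V)
    (M N : Ideal (integralClosure V K))
    (hM : ∀ x : integralClosure V K, x ∈ M ↔ (x : K) ∈ V₁.nonunits)
    (hN : ∀ x : integralClosure V K, x ∈ N ↔
      ∃ y : V₁, y ∈ (IsLocalRing.maximalIdeal V₁) ^ 2 ∧ (y : K) = (x : K)) :
    M ^ 2 = N := by
  let : Algebra (integralClosure V K) V₁ :=
    (integralClosureToValuationSubring hover.ge).toAlgebra
  have hM_comap : M = (maximalIdeal V₁).comap (algebraMap (integralClosure V K) V₁) := by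
    ext x
    rw [hM, Ideal.mem_comap, ← ValuationSubring.coe_mem_nonunits_iff]
    rfl
  have hN_comap : N = (maximalIdeal V₁ ^ 2).comap (algebraMap (integralClosure V K) V₁) := by
    ext x
    rw [hN, Ideal.mem_comap]
    exact ⟨fun ⟨y, hy, hyx⟩ => (Subtype.ext hyx : y = algebraMap _ _ x) ▸ hy,
      fun h => ⟨_, h, rfl⟩⟩
  have := isMaximal_comap_integralClosureToValuationSubring hover
  have : IsLocalization.AtPrime V₁
      ((maximalIdeal V₁).comap (algebraMap (integralClosure V K) V₁)) := by
    refine isLocalization_atPrime_comap_maximalIdeal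
      (integralClosureToValuationSubring_injective hover.ge) fun a => ?_
    obtain ⟨t, s, ht, h⟩ := exists_mul_eq_of_mem_valuationSubring hV a.2
    exact ⟨t, s, mt ValuationSubring.coe_mem_nonunits_iff.mpr ht, Subtype.ext h⟩
  rw [hM_comap, hN_comap]
  exact (IsLocalization.AtPrime.under_maximalIdeal_pow _ V₁ 2).symm

/-- Let `V` be a valuation ring of `F`, `K/F` a finite Galois extension in which `V` is
unramified and defectless (equivalently: every extension of `V` to `K` has trivial
inertial group), `S` the integral closure of `V` in `K`, `V₁` a valuation ring of `K`
lying over `V`, and `M = J(V₁) ∩ S`.  Then `M² = J(V₁)² ∩ S`. -/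
theorem stmt8 (F K : Type*) [Field F] [Field K] [Algebra F K]
    [FiniteDimensional F K] [IsGalois F K]
    (V : Subring F) (hV : ∀ x : F, x ∈ V ∨ x⁻¹ ∈ V)
    (hunram : ∀ W : ValuationSubring K, (W.comap (algebraMap F K)).toSubring = V →
      ∀ σ : K ≃ₐ[F] K, (∀ x ∈ W, σ x - x ∈ W.nonunits) → σ = 1)
    (V₁ : ValuationSubring K) (hover : (V₁.comap (algebraMap F K)).toSubring = V)
    (M N : Ideal (integralClosure V K))
    (hM : ∀ x : integralClosure V K, x ∈ M ↔ (x : K) ∈ V₁.nonunits)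
    (hN : ∀ x : integralClosure V K, x ∈ N ↔
      ∃ y : V₁, y ∈ (IsLocalRing.maximalIdeal V₁) ^ 2 ∧ (y : K) = (x : K)) :
    M ^ 2 = N :=
  stmt8_general F K V hV V₁ hover M N hM hN
end

section
/- With notation as in the crossed-product setting (V a valuation ring unramified and defectless in the finite Galois extension K, S the integral closure of V in K, f : G×G → S\{0} a normalized 2-cocycle, A_f = ⊕_σ S x_σ): if the crossed-product order A_f is an Azumaya algebra over V, then f(σ,σ⁻¹) is a unit of S for every σ ∈ G, i.e., H = G. -/
open TensorProduct in
/-- The natural map `A ⊗[R] Aᵐᵒᵖ → End_R(A)`, `a ⊗ b ↦ (x ↦ a * x * b)`. -/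
noncomputable def azumayaMap (R A : Type*) [CommRing R] [Ring A] [Algebra R A] :
    A ⊗[R] Aᵐᵒᵖ →ₐ[R] Module.End R A :=
  Algebra.TensorProduct.lift (Algebra.lmul R A)
    { toFun := fun b => LinearMap.mulRight R b.unop
      map_one' := by ext x; simp
      map_mul' := by intro a b; ext x; simp [mul_assoc]
      map_zero' := by ext x; simp
      map_add' := by intro a b; ext x; simp [mul_add]
      commutes' := by intro r; ext x; simp [Algebra.smul_def]; exact (Algebra.commutes r x).symm }
    (by intro a b; exact LinearMap.commute_mulLeft_right a b.unop)

/-- `A` is an Azumaya algebra over `R`: it is a finitely generated projective faithful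
`R`-module and the natural map `A ⊗[R] Aᵐᵒᵖ → End_R(A)` is bijective. -/
def IsAzumayaAlg (R A : Type*) [CommRing R] [Ring A] [Algebra R A] : Prop :=
  Module.Finite R A ∧ Module.Projective R A ∧ FaithfulSMul R A ∧
    Function.Bijective (azumayaMap R A)

/-!
Suppose `f(σ, σ⁻¹)` lies in a maximal ideal `M` of `S`, and choose `s ∉ M` lying in every Galois
conjugate of `M` other than `M`. Over the local ring `V` the element `s x_σ` lies outside `𝔪_V A_f`,
so some `V`-linear form on the projective module `A_f` takes the value `1` on it. As
`A_f ⊗ A_fᵒᵖ → End_V(A_f)` is onto, two-sided ideals are `End_V(A_f)`-stable, hence `s x_σ`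
generates `A_f` as a two-sided ideal. The coefficient at `x_1` of that ideal lies in the ideal of
`S` generated by the `τ(s) f(τ,σ) f(τσ,(τσ)⁻¹)`, so one of these avoids `M`. Then `τ(s) ∉ M`
puts `τ` in the decomposition group `D_M`, and the cocycle identity transports
`f(τ,σ), f(τσ,(τσ)⁻¹) ∉ M` to `f(σ,σ⁻¹) ∉ M`.
-/

open scoped Pointwise

section Azumaya

variable {R A : Type*} [CommRing R] [Ring A] [Algebra R A]

open TensorProduct in
theorem azumayaMap_tmul (a : A) (b : Aᵐᵒᵖ) (y : A) :
    azumayaMap R A (a ⊗ₜ b) y = a * y * b.unop := by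
  simp [azumayaMap, mul_assoc]
  rfl

theorem apply_mem_of_surjective_azumayaMap (h : Function.Surjective (azumayaMap R A))
    (I : TwoSidedIdeal A) (φ : Module.End R A) {a : A} (ha : a ∈ I) : φ a ∈ I := by
  obtain ⟨z, rfl⟩ := h φ
  induction z using TensorProduct.induction_on with
  | zero => simp [I.zero_mem]
  | tmul u w => rw [azumayaMap_tmul]; exact I.mul_mem_right _ _ (I.mul_mem_left _ _ ha)
  | add z₁ z₂ h₁ h₂ => rw [map_add, LinearMap.add_apply]; exact I.add_mem h₁ h₂

theorem Module.Projective.exists_linearMap_apply_eq_one {P : Type*} [IsLocalRing R]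
    [AddCommGroup P] [Module R P] [Module.Projective R P] {p : P}
    (hp : p ∉ IsLocalRing.maximalIdeal R • (⊤ : Submodule R P)) :
    ∃ ℓ : P →ₗ[R] R, ℓ p = 1 := by
  obtain ⟨s, hs⟩ := Module.projective_def'.mp ‹Module.Projective R P›
  have hsp : Finsupp.linearCombination R id (s p) = p := congr($hs p)
  obtain ⟨k, hk⟩ : ∃ k, IsUnit (s p k) := by
    by_contra! hall
    refine hp (hsp ▸ Submodule.finsuppSum_mem _ _ _ _ fun k _ => ?_)
    exact Submodule.smul_mem_smul (hall k) Submodule.mem_top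
  exact ⟨hk.unit⁻¹ • (Finsupp.lapply k ∘ₗ s), by simp [Units.smul_def]⟩

theorem IsAzumayaAlg.twoSidedIdeal_eq_top [IsLocalRing R] (hA : IsAzumayaAlg R A)
    (I : TwoSidedIdeal A) {a : A} (ha : a ∈ I)
    (ha' : a ∉ IsLocalRing.maximalIdeal R • (⊤ : Submodule R A)) : I = ⊤ := by
  obtain ⟨-, hproj, -, hbij⟩ := hA
  obtain ⟨ℓ, hℓ⟩ := hproj.exists_linearMap_apply_eq_one ha'
  refine eq_top_iff.2 fun b _ => ?_
  simpa [hℓ] using apply_mem_of_surjective_azumayaMap hbij.2 I (ℓ.smulRight b) ha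

end Azumaya

section Cocycle

variable {G S : Type*} [Group G] [CommRing S] [MulSemiringAction G S]

theorem Ideal.exists_notMem_forall_smul_notMem_imp_mem_stabilizer [Finite G] (M : Ideal S)
    [hM : M.IsMaximal] : ∃ s ∉ M, ∀ τ : G, τ • s ∉ M → τ ∈ MulAction.stabilizer G M := by
  classical
  have := Fintype.ofFinite G
  let T : Finset G := {τ | τ ∉ MulAction.stabilizer G M}
  have hT : ¬ T.inf (fun τ => τ⁻¹ • M) ≤ M := by
    rw [hM.isPrime.inf_le']
    rintro ⟨τ, hτT, hτ⟩
    rw [Ideal.pointwise_smul_subset_iff, inv_inv] at hτ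
    exact (Finset.mem_filter.mp hτT).2 <| MulAction.mem_stabilizer_iff.2
      (hM.eq_of_le (Ideal.IsPrime.smul τ).ne_top hτ).symm
  obtain ⟨s, hsT, hsM⟩ := SetLike.not_le_iff_exists.mp hT
  refine ⟨s, hsM, fun τ hτs => by_contra fun hτ => hτs ?_⟩
  have hτT : τ ∈ T := by simpa [T] using hτ
  exact Ideal.mem_inv_pointwise_smul_iff.mp (Finset.inf_le (f := fun τ => τ⁻¹ • M) hτT hsT)

theorem smul_mem_iff_of_mem_stabilizer {M : Ideal S} {d : G}
    (hd : d ∈ MulAction.stabilizer G M) (y : S) : d • y ∈ M ↔ y ∈ M := by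
  conv_lhs => rw [← MulAction.mem_stabilizer_iff.mp hd]
  exact Ideal.smul_mem_pointwise_smul_iff

theorem cocycle_inv_notMem {f : G → G → S}
    (hcoc : ∀ σ τ ρ : G, σ • f τ ρ * f σ (τ * ρ) = f σ τ * f (σ * τ) ρ)
    (hf1 : ∀ σ, f 1 σ = 1) (hf1' : ∀ σ, f σ 1 = 1) {M : Ideal S} [hM : M.IsPrime] {d σ : G}
    (hd : d ∈ MulAction.stabilizer G M) (hdσ : f d σ ∉ M)
    (hdσ' : f (d * σ) (d * σ)⁻¹ ∉ M) : f σ σ⁻¹ ∉ M := by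
  have hd' : d⁻¹ ∈ MulAction.stabilizer G M := inv_mem hd
  rw [mul_inv_rev] at hdσ'
  have h₁ : f d d⁻¹ ∉ M := by
    have := hcoc d σ (σ⁻¹ * d⁻¹)
    rw [mul_inv_cancel_left] at this
    exact fun h => hM.mul_notMem hdσ hdσ' (this ▸ M.mul_mem_left _ h)
  have h₂ : f d⁻¹ d ∉ M := by
    have := hcoc d d⁻¹ d
    rw [inv_mul_cancel, mul_inv_cancel, hf1', hf1, mul_one, mul_one] at this
    rwa [← smul_mem_iff_of_mem_stabilizer hd, this]
  have h₃ : f σ (σ⁻¹ * d⁻¹) ∉ M := by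
    have := hcoc d⁻¹ (d * σ) (σ⁻¹ * d⁻¹)
    rw [show d * σ * (σ⁻¹ * d⁻¹) = 1 by group, hf1', mul_one, inv_mul_cancel_left] at this
    have h := (smul_mem_iff_of_mem_stabilizer hd' _).not.mpr hdσ'
    exact fun h' => h (this ▸ M.mul_mem_left _ h')
  have := hcoc σ (σ⁻¹ * d⁻¹) d
  rw [inv_mul_cancel_right, mul_inv_cancel_left] at this
  exact fun h => hM.mul_notMem h₃ h₂ (this ▸ M.mul_mem_left _ h)

end Cocycle

namespace CrossedProduct

section Coefficients

variable {G S A : Type*} [Fintype G] [CommRing S] [Ring A] {ι : S →+* A} {x : G → A}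

noncomputable def coeff (hbasis : ∀ a : A, ∃! c : G → S, a = ∑ σ, ι (c σ) * x σ) :
    A →+ (G → S) where
  toFun a := (hbasis a).exists.choose
  map_zero' := (hbasis 0).unique (hbasis 0).exists.choose_spec (by simp)
  map_add' a b := (hbasis (a + b)).unique (hbasis (a + b)).exists.choose_spec <| by
    simp only [Pi.add_apply, map_add, add_mul, Finset.sum_add_distrib]
    rw [← (hbasis a).exists.choose_spec, ← (hbasis b).exists.choose_spec]

variable (hbasis : ∀ a : A, ∃! c : G → S, a = ∑ σ, ι (c σ) * x σ)

theorem sum_coeff (a : A) : ∑ σ, ι (coeff hbasis a σ) * x σ = a :=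
  (hbasis a).exists.choose_spec.symm

theorem coeff_eq {a : A} {c : G → S} (h : a = ∑ σ, ι (c σ) * x σ) : coeff hbasis a = c :=
  (hbasis a).unique (sum_coeff hbasis a).symm h

theorem coeff_ι_mul [DecidableEq G] (s : S) (τ : G) :
    coeff hbasis (ι s * x τ) = Pi.single τ s := by
  refine coeff_eq hbasis ?_
  rw [Finset.sum_eq_single τ (fun σ _ hσ => by simp [hσ]) (by simp)]
  simp

theorem coeff_smul {R : Type*} [CommRing R] [Algebra R S] [Algebra R A]
    (halg : ∀ r : R, algebraMap R A r = ι (algebraMap R S r)) (r : R) (a : A) :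
    coeff hbasis (r • a) = r • coeff hbasis a := by
  refine coeff_eq hbasis ?_
  conv_lhs => rw [← sum_coeff hbasis a]
  simp only [Algebra.smul_def, halg, Finset.mul_sum, Pi.smul_apply, map_mul, mul_assoc]

theorem coeff_mem_of_mem_smul_top {R : Type*} [CommRing R] [Algebra R S] [Algebra R A]
    (halg : ∀ r : R, algebraMap R A r = ι (algebraMap R S r)) {I : Ideal R} {a : A}
    (ha : a ∈ I • (⊤ : Submodule R A)) (σ : G) :
    coeff hbasis a σ ∈ I.map (algebraMap R S) := by
  refine Submodule.smul_induction_on ha (fun r hr b _ => ?_) (fun b c hb hc => ?_)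
  · rw [coeff_smul hbasis halg, Pi.smul_apply, Algebra.smul_def]
    exact Ideal.mul_mem_right _ _ (Ideal.mem_map_of_mem _ hr)
  · rw [map_add, Pi.add_apply]
    exact Ideal.add_mem _ hb hc

def coeffOneIdeal [One G] (M : Ideal S) : TwoSidedIdeal A :=
  TwoSidedIdeal.mk' {a | ∀ u w, coeff hbasis (u * a * w) 1 ∈ M}
    (fun u w => by simp)
    (fun ha hb u w => by simpa [mul_add, add_mul] using M.add_mem (ha u w) (hb u w))
    (fun ha u w => by simpa using M.neg_mem (ha u w))
    (fun {a b} hb u w => by simpa [mul_assoc] using hb (u * a) w)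
    (fun {a b} ha u w => by simpa [mul_assoc] using ha u (b * w))

theorem one_notMem_coeffOneIdeal [One G] (hx1 : x 1 = 1) {M : Ideal S} (hM : M ≠ ⊤) :
    (1 : A) ∉ coeffOneIdeal hbasis M := by
  classical
  intro h
  have h1 := (TwoSidedIdeal.mem_mk' _ _ _ _ _ _ _).mp h 1 1
  have hone : (1 : A) = ι 1 * x 1 := by rw [map_one, hx1, one_mul]
  rw [mul_one, one_mul, hone, coeff_ι_mul] at h1
  exact hM ((Ideal.eq_top_iff_one M).mpr (by simpa using h1))

end Coefficients

section Multiplication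

variable {G S A : Type*} [Group G] [CommRing S] [MulSemiringAction G S] [Ring A]
  {ι : S →+* A} {x : G → A} {f : G → G → S}

theorem ι_mul_mul_ι_mul (hxs : ∀ (σ : G) (s : S), x σ * ι s = ι (σ • s) * x σ)
    (hxx : ∀ σ τ, x σ * x τ = ι (f σ τ) * x (σ * τ)) (a b : S) (σ τ : G) :
    ι a * x σ * (ι b * x τ) = ι (a * σ • b * f σ τ) * x (σ * τ) := by
  calc ι a * x σ * (ι b * x τ) = ι a * (x σ * ι b) * x τ := by simp only [mul_assoc]
    _ = ι a * ι (σ • b) * (x σ * x τ) := by rw [hxs]; simp only [mul_assoc]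
    _ = ι (a * σ • b * f σ τ) * x (σ * τ) := by rw [hxx]; simp only [map_mul, mul_assoc]

variable [Fintype G]

theorem ι_mul_mem_coeffOneIdeal (hbasis : ∀ a : A, ∃! c : G → S, a = ∑ σ, ι (c σ) * x σ)
    (hxs : ∀ (σ : G) (s : S), x σ * ι s = ι (σ • s) * x σ)
    (hxx : ∀ σ τ, x σ * x τ = ι (f σ τ) * x (σ * τ)) {M : Ideal S} {s : S} {σ : G}
    (h : ∀ τ, τ • s * f τ σ * f (τ * σ) (τ * σ)⁻¹ ∈ M) :
    ι s * x σ ∈ coeffOneIdeal hbasis M := by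
  classical
  refine (TwoSidedIdeal.mem_mk' _ _ _ _ _ _ _).mpr fun u w => ?_
  rw [← sum_coeff hbasis u, ← sum_coeff hbasis w, Finset.sum_mul, Finset.sum_mul_sum,
    map_sum, Finset.sum_apply]
  refine Ideal.sum_mem _ fun τ _ => ?_
  rw [map_sum, Finset.sum_apply]
  refine Ideal.sum_mem _ fun ρ _ => ?_
  rw [ι_mul_mul_ι_mul hxs hxx, ι_mul_mul_ι_mul hxs hxx, coeff_ι_mul, Pi.single_apply]
  split_ifs with h1
  · obtain rfl : ρ = (τ * σ)⁻¹ := eq_inv_of_mul_eq_one_right h1.symm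
    rw [show ∀ a b c d e : S, a * b * c * d * e = a * d * (b * c * e) by intros; ring]
    exact M.mul_mem_left _ (h τ)
  · exact M.zero_mem

theorem exists_smul_mul_notMem {R : Type*} [CommRing R] [IsLocalRing R] [Algebra R S]
    [Algebra R A] (hA : IsAzumayaAlg R A)
    (hbasis : ∀ a : A, ∃! c : G → S, a = ∑ σ, ι (c σ) * x σ)
    (halg : ∀ r : R, algebraMap R A r = ι (algebraMap R S r))
    (hxs : ∀ (σ : G) (s : S), x σ * ι s = ι (σ • s) * x σ)
    (hxx : ∀ σ τ, x σ * x τ = ι (f σ τ) * x (σ * τ)) (hx1 : x 1 = 1)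
    {M : Ideal S} (hM : M ≠ ⊤) (hmM : (IsLocalRing.maximalIdeal R).map (algebraMap R S) ≤ M)
    {s : S} (hs : s ∉ M) (σ : G) : ∃ τ, τ • s * f τ σ * f (τ * σ) (τ * σ)⁻¹ ∉ M := by
  classical
  by_contra! h
  have hsσ : ι s * x σ ∉ IsLocalRing.maximalIdeal R • (⊤ : Submodule R A) := fun hsσ =>
    hs (by simpa [coeff_ι_mul] using hmM (coeff_mem_of_mem_smul_top hbasis halg hsσ σ))
  have htop := hA.twoSidedIdeal_eq_top _ (ι_mul_mem_coeffOneIdeal hbasis hxs hxx h) hsσ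
  exact one_notMem_coeffOneIdeal hbasis hx1 hM (by simp [htop])

end Multiplication

end CrossedProduct

open CrossedProduct in
theorem stmt15_general (F K : Type*) [Field F] [Field K] [Algebra F K]
    [FiniteDimensional F K]
    (V : Subring F) [ValuationRing V]
    (f : (K ≃ₐ[F] K) → (K ≃ₐ[F] K) → K)
    (hfS : ∀ σ τ, f σ τ ∈ integralClosure V K)
    (hcoc : ∀ σ τ ρ, σ (f τ ρ) * f σ (τ * ρ) = f σ τ * f (σ * τ) ρ)
    (hnorm : ∀ σ, f 1 σ = 1 ∧ f σ 1 = 1)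
    (hstabS : ∀ (σ : K ≃ₐ[F] K) (s : integralClosure V K),
      σ (s : K) ∈ integralClosure V K)
    -- the crossed product algebra `A_f`, axiomatized:
    (A : Type*) [Ring A] [Algebra V A]
    (ι : (integralClosure V K) →+* A) (x : (K ≃ₐ[F] K) → A)
    (hbasis : ∀ a : A, ∃! c : (K ≃ₐ[F] K) → (integralClosure V K),
      a = ∑ σ : K ≃ₐ[F] K, ι (c σ) * x σ)
    (hxs : ∀ (σ : K ≃ₐ[F] K) (s : integralClosure V K),
      x σ * ι s = ι ⟨σ (s : K), hstabS σ s⟩ * x σ)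
    (hxx : ∀ σ τ, x σ * x τ = ι ⟨f σ τ, hfS σ τ⟩ * x (σ * τ))
    (hx1 : x 1 = 1)
    (halg : ∀ v : V, algebraMap V A v = ι (algebraMap V (integralClosure V K) v))
    (hAz : IsAzumayaAlg V A) :
    ∀ σ : K ≃ₐ[F] K, IsUnit (⟨f σ σ⁻¹, hfS σ σ⁻¹⟩ : integralClosure V K) := by
  intro σ
  by_contra hσ
  let S := integralClosure V K
  let f' : (K ≃ₐ[F] K) → (K ≃ₐ[F] K) → S := fun σ τ => ⟨f σ τ, hfS σ τ⟩
  have hcoc' : ∀ σ τ ρ : K ≃ₐ[F] K, σ • f' τ ρ * f' σ (τ * ρ) = f' σ τ * f' (σ * τ) ρ :=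
    fun σ τ ρ => Subtype.ext (hcoc σ τ ρ)
  obtain ⟨M, hM, hσM⟩ := exists_max_ideal_of_mem_nonunits (mem_nonunits_iff.2 hσ)
  have hmM : (IsLocalRing.maximalIdeal V).map (algebraMap V S) ≤ M :=
    Ideal.map_le_iff_le_comap.2
      (IsLocalRing.eq_maximalIdeal (Ideal.isMaximal_comap_of_isIntegral_of_isMaximal M)).ge
  obtain ⟨s, hsM, hsD⟩ := M.exists_notMem_forall_smul_notMem_imp_mem_stabilizer (G := K ≃ₐ[F] K)
  obtain ⟨τ, hτ⟩ := exists_smul_mul_notMem hAz hbasis halg hxs hxx hx1 hM.ne_top hmM hsM σ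
  have hτs : τ • s ∉ M := fun h => hτ (M.mul_mem_right _ (M.mul_mem_right _ h))
  have hfτσ : f' τ σ ∉ M := fun h => hτ (M.mul_mem_right _ (M.mul_mem_left _ h))
  have hfτσ' : f' (τ * σ) (τ * σ)⁻¹ ∉ M := fun h => hτ (M.mul_mem_left _ h)
  exact cocycle_inv_notMem hcoc' (fun σ => Subtype.ext (hnorm σ).1)
    (fun σ => Subtype.ext (hnorm σ).2) (hsD τ hτs) hfτσ hfτσ' hσM

/-- Let `V` be a valuation ring of `F`, unramified and defectless in the finite Galois
extension `K/F` (trivial inertial groups), `S` the integral closure of `V` in `K`, and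
`f : G×G → S\{0}` a normalized 2-cocycle all of whose values are units of `S` (`H = G`).
If the crossed product order `A_f = ⊕_σ S·x_σ` is an Azumaya algebra over `V`, then
`f(σ,σ⁻¹)` is a unit of `S` for every `σ ∈ G`, i.e. `H = G`. -/
theorem stmt15 (F K : Type*) [Field F] [Field K] [Algebra F K]
    [FiniteDimensional F K] [IsGalois F K]
    (V : Subring F) [ValuationRing V] (hV : ∀ x : F, x ∈ V ∨ x⁻¹ ∈ V)
    (hunram : ∀ W : ValuationSubring K, (W.comap (algebraMap F K)).toSubring = V →
      ∀ σ : K ≃ₐ[F] K, (∀ x ∈ W, σ x - x ∈ W.nonunits) → σ = 1)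
    (f : (K ≃ₐ[F] K) → (K ≃ₐ[F] K) → K)
    (hfS : ∀ σ τ, f σ τ ∈ integralClosure V K)
    (hf0 : ∀ σ τ, f σ τ ≠ 0)
    (hcoc : ∀ σ τ ρ, σ (f τ ρ) * f σ (τ * ρ) = f σ τ * f (σ * τ) ρ)
    (hnorm : ∀ σ, f 1 σ = 1 ∧ f σ 1 = 1)
    (hstabS : ∀ (σ : K ≃ₐ[F] K) (s : integralClosure V K),
      σ (s : K) ∈ integralClosure V K)
    -- the crossed product algebra `A_f`, axiomatized:
    (A : Type*) [Ring A] [Algebra V A]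
    (ι : (integralClosure V K) →+* A) (x : (K ≃ₐ[F] K) → A)
    (hbasis : ∀ a : A, ∃! c : (K ≃ₐ[F] K) → (integralClosure V K),
      a = ∑ σ : K ≃ₐ[F] K, ι (c σ) * x σ)
    (hxs : ∀ (σ : K ≃ₐ[F] K) (s : integralClosure V K),
      x σ * ι s = ι ⟨σ (s : K), hstabS σ s⟩ * x σ)
    (hxx : ∀ σ τ, x σ * x τ = ι ⟨f σ τ, hfS σ τ⟩ * x (σ * τ))
    (hx1 : x 1 = 1)
    (halg : ∀ v : V, algebraMap V A v = ι (algebraMap V (integralClosure V K) v))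
    (hAz : IsAzumayaAlg V A) :
    ∀ σ : K ≃ₐ[F] K, IsUnit (⟨f σ σ⁻¹, hfS σ σ⁻¹⟩ : integralClosure V K) :=
  stmt15_general F K V f hfS hcoc hnorm hstabS A ι x hbasis hxs hxx hx1 halg hAz
end
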